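/- Suppose w : ℕ → ℝ is positive with ∑_k k^n w(k) < ∞ for all n, and satisfies θ(k+1)w(k+1) = σ(k)w(k) with θ(0) = 0, θ, σ polynomials. Define moments ρ_n = ∑_{k≥0} k^n w(k) and the moment matrix G_{n,m} = ρ_{n+m}. Then ∑_{k≥0} θ(k)·k^{n+m}·w(k) = ∑_{k≥0} σ(k)·(k+1)^n·(k+1)^m·w(k) for all n, m ∈ ℕ. -/
import Mathlib

lemma summable_poly_mul (w : ℕ → ℝ)
    (hmom : ∀ n : ℕ, Summable fun k : ℕ => (k : ℝ) ^ n * w k)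
    (p : Polynomial ℝ) (N : ℕ) :
    Summable fun k : ℕ => p.eval (k : ℝ) * (k : ℝ) ^ N * w k := by
  have : (fun k : ℕ => p.eval (k : ℝ) * (k : ℝ) ^ N * w k)
      = fun k : ℕ => ∑ i ∈ Finset.range (p.natDegree + 1),
          p.coeff i * ((k : ℝ) ^ (i + N) * w k) := by
    funext k
    rw [Polynomial.eval_eq_sum_range, Finset.sum_mul, Finset.sum_mul]
    refine Finset.sum_congr rfl fun i _ => ?_
    ring
  rw [this]
  exact summable_sum fun i _ => (hmom (i + N)).mul_left _

/-- Hypergeometric symmetry of the moment matrix: if the weight satisfies the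
discrete Pearson equation `θ(k+1)w(k+1) = σ(k)w(k)` with `θ(0)=0`, then
`θ(Λ)G = B σ(Λ) G Bᵀ` entrywise, i.e.
`∑ₖ θ(k) kⁿ⁺ᵐ w(k) = ∑ₖ σ(k)(k+1)ⁿ(k+1)ᵐ w(k)`. -/
theorem moment_matrix_symmetry (w : ℕ → ℝ) (hw : ∀ k, 0 < w k)
    (hmom : ∀ n : ℕ, Summable fun k : ℕ => (k : ℝ) ^ n * w k)
    (θ σ : Polynomial ℝ) (hθ0 : θ.eval 0 = 0)
    (hPearson : ∀ k : ℕ, θ.eval ((k : ℝ) + 1) * w (k + 1) = σ.eval (k : ℝ) * w k) :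
    ∀ n m : ℕ,
      (∑' k : ℕ, θ.eval (k : ℝ) * (k : ℝ) ^ (n + m) * w k)
        = ∑' k : ℕ, σ.eval (k : ℝ) * ((k : ℝ) + 1) ^ n * ((k : ℝ) + 1) ^ m * w k := by
  intro n m
  have hf : Summable fun k : ℕ => θ.eval (k : ℝ) * (k : ℝ) ^ (n + m) * w k :=
    summable_poly_mul w hmom θ (n + m)
  rw [Summable.tsum_eq_zero_add hf]
  have h0 : θ.eval ((0 : ℕ) : ℝ) * ((0 : ℕ) : ℝ) ^ (n + m) * w 0 = 0 := by
    simp [hθ0]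
  rw [h0, zero_add]
  refine tsum_congr fun k => ?_
  have := hPearson k
  push_cast
  calc θ.eval ((k : ℝ) + 1) * ((k : ℝ) + 1) ^ (n + m) * w (k + 1)
      = (θ.eval ((k : ℝ) + 1) * w (k + 1)) * ((k : ℝ) + 1) ^ (n + m) := by ring
    _ = (σ.eval (k : ℝ) * w k) * ((k : ℝ) + 1) ^ (n + m) := by rw [this]
    _ = σ.eval (k : ℝ) * ((k : ℝ) + 1) ^ n * ((k : ℝ) + 1) ^ m * w k := by
        rw [pow_add]; ring
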